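/- arXiv:1111.1825 — 2 statements merged into one kernel-verified Lean document; each statement's English description precedes it below -/
import Mathlib

section
/- Let f:(0,∞)→(0,∞) be a Kneser function of order d≥1. Then the left derivative f'_−(r) exists at every r>0 and the function r ↦ f'_−(r)/r^{d−1} is non-increasing: for 0<t≤r, f'_−(t)/t^{d−1} ≥ f'_−(r)/r^{d−1}. -/
/-!
Fix `r > 0` and put `P(c) = f(r) - f(rc)` for `0 < c ≤ 1`. Kneser's inequality with `λ = 1/c`
gives `P(cc') ≥ P(c) + c^d P(c')`, the relation that `E(c) = 1 - c^d` satisfies with equality.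
Iterating it along the powers `c^n`, and using that `f` is nondecreasing, gives
`P(c) / E(c) ≤ P(c') / E(c'/c)` for `c' ≤ c < 1`, so `P / E` converges as `c → 1⁻` (to its
infimum `L(r)`), and the left derivative at `r` is `d L(r) / r`. Kneser's inequality with
`λ = r/t` gives `L(r) ≤ (r/t)^d L(t)`, i.e. `f'₋(r) / r^(d-1) = d L(r) / r^d` is nonincreasing.
-/

open Filter Set Topology

/-- A Kneser function of order `d`: a positive function on `(0,∞)` satisfying
`f(λb) − f(λa) ≤ λ^d (f(b) − f(a))` for all `0 < a ≤ b` and `λ ≥ 1`. -/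
def IsKneser (f : ℝ → ℝ) (d : ℝ) : Prop :=
  (∀ x : ℝ, 0 < x → 0 < f x) ∧
  ∀ a b lam : ℝ, 0 < a → a ≤ b → 1 ≤ lam →
    f (lam * b) - f (lam * a) ≤ lam ^ d * (f b - f a)

theorem tendsto_csInf_image_of_forall_eventually_lt {α β : Type*}
    [ConditionallyCompleteLinearOrder β] [TopologicalSpace β] [OrderTopology β]
    {l : Filter α} {Q : α → β} {s : Set α} (hs : s.Nonempty) (hsl : s ∈ l)
    (hbdd : BddBelow (Q '' s)) (h : ∀ y ∈ s, ∀ m, Q y < m → ∀ᶠ x in l, Q x < m) :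
    Tendsto Q l (𝓝 (sInf (Q '' s))) := by
  refine tendsto_order.2 ⟨fun m hm => ?_, fun m hm => ?_⟩
  · filter_upwards [hsl] with x hx using hm.trans_le (csInf_le hbdd (mem_image_of_mem Q hx))
  · obtain ⟨_, ⟨y, hy, rfl⟩, hym⟩ := exists_lt_of_csInf_lt (hs.image Q) hm
    exact h y hy m hym

theorem HasDerivWithinAt.of_tendsto_sub_div_sub {g h : ℝ → ℝ} {s : Set ℝ} {x h' L : ℝ}
    (hh : HasDerivWithinAt h h' s x) (hne : ∀ᶠ y in 𝓝[s \ {x}] x, h y ≠ h x)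
    (hlim : Tendsto (fun y => (g y - g x) / (h y - h x)) (𝓝[s \ {x}] x) (𝓝 L)) :
    HasDerivWithinAt g (L * h') s x := by
  rw [hasDerivWithinAt_iff_tendsto_slope] at hh ⊢
  refine (hlim.mul hh).congr' ?_
  filter_upwards [hne, self_mem_nhdsWithin] with y hy hys
  rw [slope_def_field, slope_def_field]
  field_simp [sub_ne_zero.2 hy, sub_ne_zero.2 hys.2]

theorem hasDerivWithinAt_Iio_of_tendsto_div_one_sub_rpow {f : ℝ → ℝ} {r d L : ℝ}
    (hr : 0 < r) (hd : d ≠ 0)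
    (h : Tendsto (fun c => (f r - f (r * c)) / (1 - c ^ d)) (𝓝[<] 1) (𝓝 L)) :
    HasDerivWithinAt f (d * L / r) (Iio r) r := by
  have hpow : HasDerivWithinAt (fun c : ℝ => c ^ d) d (Iio 1) 1 := by
    simpa using (Real.hasDerivAt_rpow_const (x := 1) (p := d) (Or.inl one_ne_zero)).hasDerivWithinAt
  have hs : Iio (1 : ℝ) \ {1} = Iio 1 := sdiff_singleton_eq_self (lt_irrefl (1 : ℝ))
  have hg : HasDerivWithinAt (fun c => f (r * c)) (L * d) (Iio 1) 1 := by
    refine hpow.of_tendsto_sub_div_sub ?_ ?_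
    · rw [hs]
      filter_upwards [Ioo_mem_nhdsLT zero_lt_one] with c hc
      rw [Real.one_rpow]
      intro hc1
      exact hc.2.ne (Real.rpow_left_injOn hd hc.1.le (show (0 : ℝ) ≤ 1 from zero_le_one)
        (by simpa using hc1))
    · rw [hs]
      refine h.congr fun c => ?_
      rw [mul_one, Real.one_rpow, ← neg_div_neg_eq, neg_sub, neg_sub]
  have hdiv : HasDerivWithinAt (fun y => y / r) (1 / r) (Iio r) r :=
    ((hasDerivAt_id r).div_const r).hasDerivWithinAt
  have hcomp := hg.comp_of_eq r hdiv (fun y hy => (div_lt_one hr).2 hy) (div_self hr.ne').symm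
  rwa [show (fun c => f (r * c)) ∘ (fun y => y / r) = f from
      funext fun y => congrArg f (mul_div_cancel₀ y hr.ne'),
    show L * d * (1 / r) = d * L / r by ring] at hcomp

theorem mul_one_sub_rpow_pow_le {P : ℝ → ℝ} {d c : ℝ} (hd : 0 ≤ d) (hP1 : P 1 = 0)
    (hc : c ∈ Ioc (0 : ℝ) 1)
    (hsuper : ∀ x ∈ Ioc (0 : ℝ) 1, ∀ y ∈ Ioc (0 : ℝ) 1, P x + x ^ d * P y ≤ P (x * y))
    (n : ℕ) : P c * (1 - (c ^ n) ^ d) ≤ P (c ^ n) * (1 - c ^ d) := by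
  have hw : 0 ≤ 1 - c ^ d := sub_nonneg.2 (Real.rpow_le_one hc.1.le hc.2 hd)
  induction n with
  | zero => simp [hP1]
  | succ n ih =>
    have hcn : c ^ n ∈ Ioc (0 : ℝ) 1 := ⟨pow_pos hc.1 n, pow_le_one₀ hc.1.le hc.2⟩
    have hstep := mul_le_mul_of_nonneg_right (hsuper _ hcn c hc) hw
    rw [← pow_succ] at hstep
    have hpow : (c ^ (n + 1)) ^ d = (c ^ n) ^ d * c ^ d := by
      rw [pow_succ, Real.mul_rpow (pow_nonneg hc.1.le n) hc.1.le]
    rw [hpow]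
    linear_combination ih + hstep

theorem mul_one_sub_rpow_div_le {P : ℝ → ℝ} {d c c' : ℝ} (hd : 0 ≤ d) (hP1 : P 1 = 0)
    (hmono : AntitoneOn P (Ioc 0 1))
    (hsuper : ∀ x ∈ Ioc (0 : ℝ) 1, ∀ y ∈ Ioc (0 : ℝ) 1, P x + x ^ d * P y ≤ P (x * y))
    (hc' : 0 < c') (hc'c : c' ≤ c) (hc : c < 1) :
    P c * (1 - (c' / c) ^ d) ≤ P c' * (1 - c ^ d) := by
  have hc0 : 0 < c := hc'.trans_le hc'c
  have hcI : c ∈ Ioc (0 : ℝ) 1 := ⟨hc0, hc.le⟩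
  obtain ⟨n, hlt, hle⟩ := exists_nat_pow_near_of_lt_one hc' (hc'c.trans hc.le) hc0 hc
  have hPc : 0 ≤ P c := hP1 ▸ hmono hcI ⟨one_pos, le_rfl⟩ hc.le
  have hpow : (c ^ n) ^ d ≤ (c' / c) ^ d := by
    refine Real.rpow_le_rpow (pow_nonneg hc0.le n) ?_ hd
    rw [le_div_iff₀ hc0, ← pow_succ]
    exact hlt.le
  calc P c * (1 - (c' / c) ^ d) ≤ P c * (1 - (c ^ n) ^ d) := by gcongr
    _ ≤ P (c ^ n) * (1 - c ^ d) := mul_one_sub_rpow_pow_le hd hP1 hcI hsuper n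
    _ ≤ P c' * (1 - c ^ d) := by
      gcongr
      · exact sub_nonneg.2 (Real.rpow_le_one hc0.le hc.le hd)
      · exact hmono ⟨hc', hle.trans (pow_le_one₀ hc0.le hc.le)⟩
          ⟨pow_pos hc0 n, pow_le_one₀ hc0.le hc.le⟩ hle

theorem exists_tendsto_div_one_sub_rpow {P : ℝ → ℝ} {d : ℝ} (hd : 0 < d) (hP1 : P 1 = 0)
    (hmono : AntitoneOn P (Ioc 0 1))
    (hsuper : ∀ x ∈ Ioc (0 : ℝ) 1, ∀ y ∈ Ioc (0 : ℝ) 1, P x + x ^ d * P y ≤ P (x * y)) :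
    ∃ L, Tendsto (fun c => P c / (1 - c ^ d)) (𝓝[<] 1) (𝓝 L) := by
  have hE : ∀ c ∈ Ioo (0 : ℝ) 1, 0 < 1 - c ^ d := fun c hc =>
    sub_pos.2 (Real.rpow_lt_one hc.1.le hc.2 hd)
  have hbdd : BddBelow ((fun c => P c / (1 - c ^ d)) '' Ioo 0 1) := by
    refine ⟨0, ?_⟩
    rintro _ ⟨c, hc, rfl⟩
    exact div_nonneg (hP1 ▸ hmono ⟨hc.1, hc.2.le⟩ ⟨one_pos, le_rfl⟩ hc.2.le) (hE c hc).le
  refine ⟨_, tendsto_csInf_image_of_forall_eventually_lt (nonempty_Ioo.2 one_pos)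
    (Ioo_mem_nhdsLT one_pos) hbdd fun y hy m hym => ?_⟩
  have hcont : Tendsto (fun c => P y / (1 - (y / c) ^ d)) (𝓝 1) (𝓝 (P y / (1 - y ^ d))) := by
    have : ContinuousAt (fun c => P y / (1 - (y / c) ^ d)) 1 :=
      continuousAt_const.div (continuousAt_const.sub
        ((continuousAt_const.div continuousAt_id one_ne_zero).rpow_const (Or.inr hd.le)))
        (by simpa using (hE y hy).ne')
    simpa using this.tendsto
  filter_upwards [nhdsWithin_le_nhds (hcont.eventually_lt_const hym), Ioo_mem_nhdsLT hy.2]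
    with c hcm hc
  have hyc : 0 < 1 - (y / c) ^ d :=
    hE _ ⟨div_pos hy.1 (hy.1.trans hc.1), (div_lt_one (hy.1.trans hc.1)).2 hc.1⟩
  refine lt_of_le_of_lt ?_ hcm
  rw [div_le_div_iff₀ (hE c ⟨hy.1.trans hc.1, hc.2⟩) hyc]
  exact mul_one_sub_rpow_div_le hd.le hP1 hmono hsuper hy.1 hc.1.le hc.2

namespace IsKneser

variable {f : ℝ → ℝ} {d : ℝ}

theorem rpow_mul_sub_le (hf : IsKneser f d) {μ a b : ℝ} (hμ : 0 < μ) (hμ1 : μ ≤ 1)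
    (ha : 0 < a) (hab : a ≤ b) : μ ^ d * (f b - f a) ≤ f (μ * b) - f (μ * a) := by
  have h := hf.2 (μ * a) (μ * b) μ⁻¹ (mul_pos hμ ha) (mul_le_mul_of_nonneg_left hab hμ.le)
    (one_le_inv₀ hμ |>.2 hμ1)
  rw [inv_mul_cancel_left₀ hμ.ne', inv_mul_cancel_left₀ hμ.ne', Real.inv_rpow hμ.le] at h
  have hμd : 0 < μ ^ d := Real.rpow_pos_of_pos hμ d
  calc μ ^ d * (f b - f a) ≤ μ ^ d * ((μ ^ d)⁻¹ * (f (μ * b) - f (μ * a))) := by gcongr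
    _ = f (μ * b) - f (μ * a) := mul_inv_cancel_left₀ hμd.ne' _

theorem monotoneOn (hd : 0 ≤ d) (hf : IsKneser f d) : MonotoneOn f (Ioi 0) := by
  intro a ha b _ hab
  by_contra! hba
  have hab' : a < b := hab.lt_of_ne fun h => (h ▸ hba).false
  set δ := f a - f b
  have hq : 1 < b / a := (one_lt_div ha).2 hab'
  -- Each rescaling by `b / a` lowers `f` by at least `δ`, contradicting `f > 0`.
  have hstep : ∀ n : ℕ, f ((b / a) ^ (n + 1) * a) ≤ f ((b / a) ^ n * a) - δ := fun n => by
    have hqn : 1 ≤ (b / a) ^ n := one_le_pow₀ hq.le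
    have h := hf.2 a b _ ha hab hqn
    have hpow : 1 ≤ ((b / a) ^ n) ^ d := Real.one_le_rpow hqn hd
    rw [pow_succ, mul_assoc, div_mul_cancel₀ b ha.ne']
    nlinarith
  have hdecr : ∀ n : ℕ, f ((b / a) ^ n * a) ≤ f a - n * δ := fun n => by
    induction n with
    | zero => simp
    | succ n ih => push_cast; linarith [hstep n]
  obtain ⟨n, hn⟩ := exists_nat_gt (f a / δ)
  have := hf.1 _ (mul_pos (pow_pos (one_pos.trans hq) n) ha)
  rw [div_lt_iff₀ (sub_pos.2 hba)] at hn
  linarith [hdecr n]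

theorem exists_tendsto_div_one_sub_rpow (hd : 0 < d) (hf : IsKneser f d) {r : ℝ} (hr : 0 < r) :
    ∃ L, Tendsto (fun c => (f r - f (r * c)) / (1 - c ^ d)) (𝓝[<] 1) (𝓝 L) := by
  refine _root_.exists_tendsto_div_one_sub_rpow hd (by simp) ?_ fun c hc c' hc' => ?_
  · intro c hc c' hc' hcc'
    have := hf.monotoneOn hd.le (mul_pos hr hc.1) (mul_pos hr hc'.1)
      (mul_le_mul_of_nonneg_left hcc' hr.le)
    dsimp only
    linarith
  · have h := hf.rpow_mul_sub_le hc.1 hc.2 (mul_pos hr hc'.1)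
      (mul_le_of_le_one_right hr.le hc'.2)
    rw [mul_left_comm, mul_comm c r] at h
    linarith

theorem sub_le_div_rpow_mul_sub (hf : IsKneser f d) {t r c : ℝ} (ht : 0 < t) (htr : t ≤ r)
    (hc : 0 < c) (hc1 : c ≤ 1) : f r - f (r * c) ≤ (r / t) ^ d * (f t - f (t * c)) := by
  have h := hf.2 (t * c) t (r / t) (mul_pos ht hc) (mul_le_of_le_one_right ht.le hc1)
    ((one_le_div ht).2 htr)
  rwa [div_mul_cancel₀ r ht.ne', ← mul_assoc, div_mul_cancel₀ r ht.ne'] at h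

end IsKneser

theorem kneser_leftDeriv_exists_and_antitone (f : ℝ → ℝ) (d : ℝ) (hd : 1 ≤ d)
    (hf : IsKneser f d) :
    (∀ r : ℝ, 0 < r → ∃ D : ℝ, HasDerivWithinAt f D (Set.Iio r) r) ∧
    ∀ t r : ℝ, 0 < t → t ≤ r →
      derivWithin f (Set.Iio r) r / r ^ (d - 1) ≤ derivWithin f (Set.Iio t) t / t ^ (d - 1) := by
  have hd0 : 0 < d := one_pos.trans_le hd
  choose L hL using fun r (hr : 0 < r) => hf.exists_tendsto_div_one_sub_rpow hd0 hr
  have hD : ∀ r (hr : 0 < r), HasDerivWithinAt f (d * L r hr / r) (Iio r) r := fun r hr =>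
    hasDerivWithinAt_Iio_of_tendsto_div_one_sub_rpow hr hd0.ne' (hL r hr)
  refine ⟨fun r hr => ⟨_, hD r hr⟩, fun t r ht htr => ?_⟩
  have hr : 0 < r := ht.trans_le htr
  have hLrt : L r hr ≤ (r / t) ^ d * L t ht := by
    refine le_of_tendsto_of_tendsto (hL r hr) ((hL t ht).const_mul _) ?_
    filter_upwards [Ioo_mem_nhdsLT one_pos] with c hc
    rw [← mul_div_assoc]
    exact div_le_div_of_nonneg_right (hf.sub_le_div_rpow_mul_sub ht htr hc.1 hc.2.le)
      (sub_nonneg.2 (Real.rpow_le_one hc.1.le hc.2.le hd0.le))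
  have hnorm : ∀ x M : ℝ, 0 < x → d * M / x / x ^ (d - 1) = d * M / x ^ d := fun x M hx => by
    rw [Real.rpow_sub_one hx.ne', div_div, mul_div_cancel₀ _ hx.ne']
  rw [(hD r hr).derivWithin (uniqueDiffWithinAt_Iio r),
    (hD t ht).derivWithin (uniqueDiffWithinAt_Iio t), hnorm _ _ hr, hnorm _ _ ht,
    div_le_div_iff₀ (Real.rpow_pos_of_pos hr d) (Real.rpow_pos_of_pos ht d)]
  rw [Real.div_rpow hr.le ht.le, div_mul_eq_mul_div, le_div_iff₀ (Real.rpow_pos_of_pos ht d)]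
    at hLrt
  linarith [mul_le_mul_of_nonneg_left hLrt hd0.le]
end

section
/- Let F⊂ℝ be compact with Lebesgue measure zero, fractal string (l_j), and D∈(0,1). If 0 < 𝓢̲^D(F) ≤ 𝓢̄^D(F) < ∞, then l_j ≍ j^{−1/D} as j→∞, i.e. 0 < liminf_j l_j j^{1/D} ≤ limsup_j l_j j^{1/D} < ∞. -/
open Filter Set Topology MeasureTheory Metric ENNReal

/-- `κ_t = π^{t/2} / Γ(1 + t/2)`. -/
noncomputable def kappa (t : ℝ) : ℝ := Real.pi ^ (t / 2) / Real.Gamma (1 + t / 2)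

/-- `(l_j)` is the fractal string of the compact set `F ⊂ ℝ`: a non-increasing sequence of
positive lengths of the (pairwise disjoint) bounded complementary open intervals of `F`. -/
def IsFractalString (F : Set ℝ) (l : ℕ → ℝ) : Prop :=
  Antitone l ∧ (∀ j, 0 < l j) ∧
  ∃ a b : ℕ → ℝ,
    Pairwise (Function.onFun Disjoint fun j => Set.Ioo (a j) (b j)) ∧
    (∀ j, a j < b j ∧ b j - a j = l j) ∧
    (convexHull ℝ F) \ F = ⋃ j, Set.Ioo (a j) (b j)

/-- Lower S-content of `F ⊂ ℝ`: `liminf_{r→0} 𝓗⁰(∂F_r)/((1−D)κ_{1−D} r^{−D})`. -/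
noncomputable def lowerSContent (F : Set ℝ) (D : ℝ) : ℝ≥0∞ :=
  Filter.liminf
    (fun r : ℝ => μH[(0 : ℝ)] (frontier (cthickening r F)) /
      ENNReal.ofReal ((1 - D) * kappa (1 - D) * r ^ (-D)))
    (𝓝[>] (0 : ℝ))

/-- Upper S-content of `F ⊂ ℝ`. -/
noncomputable def upperSContent (F : Set ℝ) (D : ℝ) : ℝ≥0∞ :=
  Filter.limsup
    (fun r : ℝ => μH[(0 : ℝ)] (frontier (cthickening r F)) /
      ENNReal.ofReal ((1 - D) * kappa (1 - D) * r ^ (-D)))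
    (𝓝[>] (0 : ℝ))

/-! For `r > 0`, every point of `∂F_r` lies at distance exactly `r` from `F`, so it is
`min F - r`, `max F + r`, or `a_j + r`, `b_j - r` for a gap `(a_j, b_j)` of length `l_j ≥ 2r`;
conversely both of these points lie on `∂F_r` as soon as `l_j > 2r`. As `l` is non-increasing,
`l_n < 2r` gives `𝓗⁰(∂F_r) ≤ 2n + 2`, while `2r < l_n` gives `2n + 2 ≤ 𝓗⁰(∂F_r)`. Reading the
lower S-content bound at the scales `r ≍ n^{-1/D}` yields `l_n ≳ n^{-1/D}`, and reading the upper
one at `r = l_n / 4` yields `l_n ≲ n^{-1/D}`. -/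

open Function

lemma kappa_pos {t : ℝ} (ht : -2 < t) : 0 < kappa t :=
  div_pos (Real.rpow_pos_of_pos Real.pi_pos _) (Real.Gamma_pos_of_pos (by linarith))

section ENNRealBounds

variable {α : Type*} {L : Filter α} {f : α → ℝ≥0∞} {g : α → ℝ}

lemma exists_pos_eventually_ofReal_mul_le_of_pos_liminf
    (h : 0 < liminf (fun x => f x / ENNReal.ofReal (g x)) L) :
    ∃ c : ℝ, 0 < c ∧ ∀ᶠ x in L, ENNReal.ofReal (c * g x) ≤ f x := by
  obtain ⟨c, hc0, hc, hcL⟩ := ENNReal.lt_iff_exists_real_btwn.1 h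
  refine ⟨c, ENNReal.ofReal_pos.1 hc, ?_⟩
  filter_upwards [eventually_lt_of_lt_liminf hcL] with x hx
  rw [ENNReal.ofReal_mul hc0]
  exact ENNReal.mul_le_of_le_div hx.le

lemma exists_eventually_le_ofReal_mul_of_limsup_lt_top (hg : ∀ᶠ x in L, 0 < g x)
    (h : limsup (fun x => f x / ENNReal.ofReal (g x)) L < ⊤) :
    ∃ K : ℝ, ∀ᶠ x in L, f x ≤ ENNReal.ofReal (K * g x) := by
  obtain ⟨K, hK0, hK, -⟩ := ENNReal.lt_iff_exists_real_btwn.1 h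
  refine ⟨K, ?_⟩
  filter_upwards [eventually_lt_of_limsup_lt hK, hg] with x hx hgx
  rw [ENNReal.ofReal_mul hK0]
  exact (ENNReal.div_le_iff (ENNReal.ofReal_pos.2 hgx).ne' ENNReal.ofReal_ne_top).1 hx.le

end ENNRealBounds

section Asymptotics

variable {l : ℕ → ℝ} {D : ℝ}

lemma liminf_mul_rpow_inv_pos {c : ℝ} (hD : 0 < D) (hc : 0 < c)
    (h : ∀ᶠ r in 𝓝[>] (0 : ℝ), ∀ n : ℕ, l n < 2 * r → c * r ^ (-D) ≤ 2 * n + 2) :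
    0 < liminf (fun n : ℕ => ((l n * (n : ℝ) ^ (1 / D) : ℝ) : EReal)) atTop := by
  -- at the scale `r n` the hypothesis would give `2 * n + 3 ≤ 2 * n + 2`, so `2 * r n ≤ l n`;
  -- the constant `c / 5` comes from `n / (2 * n + 3) ≥ 1 / 5` for `n ≥ 1`
  set r : ℕ → ℝ := fun n => (c / (2 * n + 3)) ^ (1 / D) with hr
  have hr_pos : ∀ n, 0 < r n := fun n => by positivity
  have hr_tendsto : Tendsto r atTop (𝓝[>] 0) := by
    refine tendsto_nhdsWithin_iff.2 ⟨?_, .of_forall hr_pos⟩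
    have hq : Tendsto (fun n : ℕ => c / (2 * n + 3)) atTop (𝓝 0) :=
      tendsto_const_nhds.div_atTop <| tendsto_atTop_add_const_right _ _ <|
        (tendsto_natCast_atTop_atTop (R := ℝ)).const_mul_atTop two_pos
    have := hq.rpow_const (p := 1 / D) (Or.inr (one_div_pos.2 hD).le)
    rwa [Real.zero_rpow (one_div_pos.2 hD).ne'] at this
  have hbound : ∀ᶠ n : ℕ in atTop,
      ((2 * (c / 5) ^ (1 / D) : ℝ) : EReal) ≤ ((l n * (n : ℝ) ^ (1 / D) : ℝ) : EReal) := by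
    filter_upwards [hr_tendsto.eventually h, eventually_ge_atTop 1] with n hn hn1
    have hn1' : (1 : ℝ) ≤ n := by exact_mod_cast hn1
    have hscale : c * r n ^ (-D) = 2 * n + 3 := by
      rw [hr, ← Real.rpow_mul (by positivity), one_div_mul_eq_div, neg_div, div_self hD.ne',
        Real.rpow_neg_one, inv_div]
      field_simp
    have hlr : 2 * r n ≤ l n := by
      by_contra! hlt
      linarith [hn n hlt]
    have hrn : (c / 5) ^ (1 / D) ≤ r n * (n : ℝ) ^ (1 / D) := by
      rw [hr, ← Real.mul_rpow (by positivity) (by positivity)]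
      refine Real.rpow_le_rpow (by positivity) ?_ (by positivity)
      rw [div_mul_eq_mul_div, div_le_div_iff₀ (by norm_num) (by positivity)]
      nlinarith
    have : 2 * (c / 5) ^ (1 / D) ≤ l n * (n : ℝ) ^ (1 / D) := by
      nlinarith [Real.rpow_nonneg (Nat.cast_nonneg n : (0 : ℝ) ≤ n) (1 / D)]
    exact_mod_cast this
  calc (0 : EReal) < ((2 * (c / 5) ^ (1 / D) : ℝ) : EReal) := by
        exact_mod_cast (by positivity : (0 : ℝ) < 2 * (c / 5) ^ (1 / D))
    _ ≤ _ := le_liminf_of_le (by isBoundedDefault) hbound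

lemma limsup_mul_rpow_inv_lt_top {K : ℝ} (hD : 0 < D) (hpos : ∀ n, 0 < l n)
    (hl : Tendsto l atTop (𝓝 0))
    (h : ∀ᶠ r in 𝓝[>] (0 : ℝ), ∀ n : ℕ, 2 * r < l n → 2 * n + 2 ≤ K * r ^ (-D)) :
    limsup (fun n : ℕ => ((l n * (n : ℝ) ^ (1 / D) : ℝ) : EReal)) atTop < ⊤ := by
  have hscale : Tendsto (fun n => l n / 4) atTop (𝓝[>] 0) :=
    tendsto_nhdsWithin_iff.2 ⟨by simpa using hl.div_const 4, .of_forall fun n => by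
      simpa using hpos n⟩
  have hbound : ∀ᶠ n : ℕ in atTop,
      ((l n * (n : ℝ) ^ (1 / D) : ℝ) : EReal) ≤ ((4 * K ^ (1 / D) : ℝ) : EReal) := by
    filter_upwards [hscale.eventually h] with n hn
    set x := l n / 4 with hx
    have hx0 : 0 < x := by positivity [hpos n]
    have hcount : (n : ℝ) ≤ K * x ^ (-D) := by linarith [hn n (by linarith [hpos n])]
    have hxD : x ^ (-D) * x ^ D = 1 := by
      rw [← Real.rpow_add hx0, neg_add_cancel, Real.rpow_zero]
    have hnK : n * x ^ D ≤ K := by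
      have := mul_le_mul_of_nonneg_right hcount (Real.rpow_pos_of_pos hx0 D).le
      rwa [mul_assoc, hxD, mul_one] at this
    have : (n * x ^ D) ^ (1 / D) ≤ K ^ (1 / D) :=
      Real.rpow_le_rpow (by positivity) hnK (by positivity)
    rw [Real.mul_rpow (by positivity) (by positivity), ← Real.rpow_mul hx0.le,
      mul_one_div_cancel hD.ne', Real.rpow_one] at this
    have : l n * (n : ℝ) ^ (1 / D) ≤ 4 * K ^ (1 / D) := by rw [hx] at this; linarith
    exact_mod_cast this
  exact (limsup_le_of_le (by isBoundedDefault) hbound).trans_lt (EReal.coe_lt_top _)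

end Asymptotics

lemma IsCompact.convexHull_eq_Icc {F : Set ℝ} (hF : IsCompact F) (hne : F.Nonempty) :
    convexHull ℝ F = Icc (sInf F) (sSup F) := by
  refine (convexHull_min (fun x hx => mem_Icc.2 ⟨csInf_le hF.bddBelow hx,
    le_csSup hF.bddAbove hx⟩) (convex_Icc _ _)).antisymm ?_
  rw [← segment_eq_Icc (csInf_le_csSup hne hF.bddBelow hF.bddAbove)]
  exact segment_subset_convexHull (hF.sInf_mem hne) (hF.sSup_mem hne)

lemma Metric.cthickening_eq_setOf_infDist_le {X : Type*} [PseudoMetricSpace X] {F : Set X}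
    (hne : F.Nonempty) {r : ℝ} (hr : 0 ≤ r) : cthickening r F = {x | infDist x F ≤ r} := by
  ext x
  rw [mem_cthickening_iff, mem_ofPred_eq, Metric.infDist,
    ← ENNReal.le_ofReal_iff_toReal_le (infEDist_ne_top hne) hr]

lemma hausdorffMeasure_zero_finset {X : Type*} [EMetricSpace X] [MeasurableSpace X]
    [BorelSpace X] (S : Finset X) : μH[0] (S : Set X) = S.card := by
  simp [← sum_measure_singleton]

lemma infDist_eq_min_of_mem_gap {F : Set ℝ} {u v x : ℝ} (hu : u ∈ F) (hv : v ∈ F)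
    (hgap : Disjoint (Ioo u v) F) (hx : x ∈ Icc u v) : infDist x F = min (x - u) (v - x) := by
  refine le_antisymm (le_min ?_ ?_) ((le_infDist ⟨u, hu⟩).2 fun y hy => ?_)
  · simpa [Real.dist_eq, abs_of_nonneg (sub_nonneg.2 hx.1)] using
      infDist_le_dist_of_mem (x := x) hu
  · simpa [Real.dist_eq, abs_of_nonpos (sub_nonpos.2 hx.2)] using
      infDist_le_dist_of_mem (x := x) hv
  · have hy' : y ≤ u ∨ v ≤ y := by
      by_contra! h
      exact hgap.notMem_of_mem_right hy ⟨h.1, h.2⟩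
    rw [Real.dist_eq]
    rcases hy' with hy' | hy'
    · exact (min_le_left _ _).trans ((by linarith : x - u ≤ x - y).trans (le_abs_self _))
    · exact (min_le_right _ _).trans ((by linarith : v - x ≤ -(x - y)).trans (neg_le_abs _))

lemma add_and_sub_mem_frontier_cthickening {F : Set ℝ} {u v r : ℝ} (hu : u ∈ F) (hv : v ∈ F)
    (hgap : Disjoint (Ioo u v) F) (hr : 0 < r) (hrv : 2 * r < v - u) :
    u + r ∈ frontier (cthickening r F) ∧ v - r ∈ frontier (cthickening r F) := by
  have hdist : ∀ x ∈ Icc u v, infDist x F = min (x - u) (v - x) :=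
    fun x hx => infDist_eq_min_of_mem_gap hu hv hgap hx
  have hmid : Ioo (u + r) (v - r) ⊆ (cthickening r F)ᶜ := fun x hx => by
    rw [cthickening_eq_setOf_infDist_le ⟨u, hu⟩ hr.le, mem_compl_iff, mem_ofPred_eq, not_le,
      hdist x ⟨by linarith [hx.1], by linarith [hx.2]⟩]
    exact lt_min (by linarith [hx.1]) (by linarith [hx.2])
  have hclosure : Icc (u + r) (v - r) ⊆ closure (cthickening r F)ᶜ := by
    rw [← closure_Ioo (by linarith : u + r ≠ v - r)]
    exact closure_mono hmid
  have hmem : ∀ x ∈ Icc (u + r) (v - r), min (x - u) (v - x) ≤ r →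
      x ∈ frontier (cthickening r F) := fun x hx hxr => by
      rw [frontier_eq_closure_inter_closure, isClosed_cthickening.closure_eq]
      refine ⟨?_, hclosure hx⟩
      rw [cthickening_eq_setOf_infDist_le ⟨u, hu⟩ hr.le, mem_ofPred_eq,
        hdist x ⟨by linarith [hx.1], by linarith [hx.2]⟩]
      exact hxr
  exact ⟨hmem _ ⟨le_rfl, by linarith⟩ (min_le_left _ _ |>.trans (by simp)),
    hmem _ ⟨by linarith, le_rfl⟩ (min_le_right _ _ |>.trans (by simp))⟩

lemma tendsto_sub_atTop_zero_of_pairwise_disjoint_Ioo {a b : ℕ → ℝ} {K : Set ℝ}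
    (hK : volume K ≠ ⊤) (hsub : ∀ j, Ioo (a j) (b j) ⊆ K)
    (hdis : Pairwise (Disjoint on fun j => Ioo (a j) (b j))) (hab : ∀ j, a j ≤ b j) :
    Tendsto (fun j => b j - a j) atTop (𝓝 0) := by
  have hsum : ∑' j, ENNReal.ofReal (b j - a j) ≠ ⊤ := by
    refine ne_top_of_le_ne_top hK ?_
    calc ∑' j, ENNReal.ofReal (b j - a j) = volume (⋃ j, Ioo (a j) (b j)) := by
          rw [measure_iUnion hdis fun _ => measurableSet_Ioo]
          simp only [Real.volume_Ioo]
      _ ≤ volume K := measure_mono (iUnion_subset hsub)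
  simpa [ENNReal.toReal_ofReal (sub_nonneg.2 (hab _))] using
    (ENNReal.summable_toReal hsum).tendsto_atTop_zero

section Gaps

variable {F : Set ℝ} {a b : ℕ → ℝ}

lemma Ioo_subset_convexHull_diff (hset : convexHull ℝ F \ F = ⋃ j, Ioo (a j) (b j)) (j : ℕ) :
    Ioo (a j) (b j) ⊆ convexHull ℝ F \ F :=
  hset ▸ subset_iUnion (fun i => Ioo (a i) (b i)) j

lemma disjoint_gap (hset : convexHull ℝ F \ F = ⋃ j, Ioo (a j) (b j)) (j : ℕ) :
    Disjoint (Ioo (a j) (b j)) F :=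
  subset_compl_iff_disjoint_right.1 fun _ hy => (Ioo_subset_convexHull_diff hset j hy).2

lemma mem_of_mem_closure_gap (hcl : IsClosed (convexHull ℝ F))
    (hdis : Pairwise (Disjoint on fun j => Ioo (a j) (b j)))
    (hset : convexHull ℝ F \ F = ⋃ j, Ioo (a j) (b j)) {j : ℕ} {x : ℝ}
    (hx : x ∈ closure (Ioo (a j) (b j))) (hxj : x ∉ Ioo (a j) (b j)) : x ∈ F := by
  by_contra hxF
  have hhull : x ∈ convexHull ℝ F :=
    closure_minimal (fun y hy => (Ioo_subset_convexHull_diff hset j hy).1) hcl hx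
  obtain ⟨i, hi⟩ := mem_iUnion.1 (hset ▸ ⟨hhull, hxF⟩ : x ∈ ⋃ j, Ioo (a j) (b j))
  have hij : i ≠ j := by rintro rfl; exact hxj hi
  obtain ⟨y, hyi, hyj⟩ := mem_closure_iff_nhds.1 hx _ (isOpen_Ioo.mem_nhds hi)
  exact Set.disjoint_left.1 (hdis hij) hyi hyj

lemma gap_endpoints_mem (hF : IsCompact F)
    (hdis : Pairwise (Disjoint on fun j => Ioo (a j) (b j)))
    (hset : convexHull ℝ F \ F = ⋃ j, Ioo (a j) (b j)) (hab : ∀ j, a j < b j) (j : ℕ) :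
    a j ∈ F ∧ b j ∈ F := by
  obtain ⟨x, hx⟩ := nonempty_Ioo.2 (hab 0)
  have hne : F.Nonempty := convexHull_nonempty_iff.1 ⟨x, (Ioo_subset_convexHull_diff hset 0 hx).1⟩
  have hcl : IsClosed (convexHull ℝ F) := hF.convexHull_eq_Icc hne ▸ isClosed_Icc
  have hcl_j : closure (Ioo (a j) (b j)) = Icc (a j) (b j) := closure_Ioo (hab j).ne
  exact ⟨mem_of_mem_closure_gap hcl hdis hset (hcl_j ▸ left_mem_Icc.2 (hab j).le)
      fun h => h.1.false,
    mem_of_mem_closure_gap hcl hdis hset (hcl_j ▸ right_mem_Icc.2 (hab j).le) fun h => h.2.false⟩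

end Gaps

section Frontier

variable {F : Set ℝ} {a b : ℕ → ℝ} {r : ℝ}

lemma eq_of_mem_frontier_cthickening (hF : IsCompact F) (hends : ∀ j, a j ∈ F ∧ b j ∈ F)
    (hset : convexHull ℝ F \ F = ⋃ j, Ioo (a j) (b j)) (hr : 0 < r) {x : ℝ}
    (hx : x ∈ frontier (cthickening r F)) :
    x = sInf F - r ∨ x = sSup F + r ∨ ∃ j, 2 * r ≤ b j - a j ∧ (x = a j + r ∨ x = b j - r) := by
  have hne : F.Nonempty := ⟨a 0, (hends 0).1⟩
  have hinf : infDist x F = r := by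
    rw [Metric.infDist, Metric.frontier_cthickening_subset F hx, ENNReal.toReal_ofReal hr.le]
  have hxF : x ∉ F := fun h => by rw [infDist_zero_of_mem h] at hinf; exact hr.ne hinf
  rcases lt_or_ge x (sInf F) with hlt | hge
  · have hle : r ≤ sInf F - x := by
      simpa [hinf, Real.dist_eq, abs_of_neg (sub_neg.2 hlt)] using
        infDist_le_dist_of_mem (x := x) (hF.sInf_mem hne)
    have hge : sInf F - x ≤ r := hinf ▸ (le_infDist hne).2 fun y hy => by
      have := csInf_le hF.bddBelow hy
      rw [Real.dist_eq, abs_of_neg (by linarith)]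
      linarith
    exact .inl (by linarith)
  rcases le_or_gt x (sSup F) with hle | hgt
  · obtain ⟨j, hj⟩ := mem_iUnion.1
      (hset ▸ ⟨hF.convexHull_eq_Icc hne ▸ ⟨hge, hle⟩, hxF⟩ : x ∈ ⋃ j, Ioo (a j) (b j))
    rw [infDist_eq_min_of_mem_gap (hends j).1 (hends j).2 (disjoint_gap hset j)
      ⟨hj.1.le, hj.2.le⟩] at hinf
    refine .inr (.inr ⟨j, ?_, ?_⟩)
    · linarith [min_le_left (x - a j) (b j - x), min_le_right (x - a j) (b j - x)]
    · rcases min_choice (x - a j) (b j - x) with h | h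
      · exact .inl (by linarith)
      · exact .inr (by linarith)
  · have hle : r ≤ x - sSup F := by
      simpa [hinf, Real.dist_eq, abs_of_pos (sub_pos.2 hgt)] using
        infDist_le_dist_of_mem (x := x) (hF.sSup_mem hne)
    have hge : x - sSup F ≤ r := hinf ▸ (le_infDist hne).2 fun y hy => by
      have := le_csSup hF.bddAbove hy
      rw [Real.dist_eq, abs_of_pos (by linarith)]
      linarith
    exact .inr (.inl (by linarith))

lemma hausdorffMeasure_frontier_cthickening_le (hF : IsCompact F)
    (hends : ∀ j, a j ∈ F ∧ b j ∈ F) (hset : convexHull ℝ F \ F = ⋃ j, Ioo (a j) (b j))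
    (hmono : Antitone fun j => b j - a j) (hr : 0 < r) {n : ℕ} (hn : b n - a n < 2 * r) :
    μH[0] (frontier (cthickening r F)) ≤ ((2 * n + 2 : ℕ) : ℝ≥0∞) := by
  classical
  set S : Finset ℝ :=
    {sInf F - r, sSup F + r} ∪ (Finset.range n).biUnion fun j => {a j + r, b j - r}
  have hsub : frontier (cthickening r F) ⊆ S := fun x hx => by
    rcases eq_of_mem_frontier_cthickening hF hends hset hr hx with h | h | ⟨j, hj, h⟩
    · simp [S, h]
    · simp [S, h]
    · have hjn : j < n := by
        by_contra! hnj
        linarith [hmono hnj]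
      simp only [S, Finset.coe_union, Finset.coe_biUnion, Finset.coe_range, mem_union,
        mem_iUnion]
      exact .inr ⟨j, hjn, by simpa using h⟩
  have hcard : S.card ≤ 2 * n + 2 := by
    calc S.card ≤ 2 + 2 * n :=
          (Finset.card_union_le _ _).trans <| add_le_add Finset.card_le_two <|
            (Finset.card_biUnion_le_card_mul _ _ 2 fun _ _ => Finset.card_le_two).trans_eq
              (by simp [mul_comm])
      _ = 2 * n + 2 := by ring
  calc μH[0] (frontier (cthickening r F)) ≤ μH[0] (S : Set ℝ) := measure_mono hsub
    _ = S.card := hausdorffMeasure_zero_finset S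
    _ ≤ _ := by exact_mod_cast hcard

lemma le_hausdorffMeasure_frontier_cthickening (hends : ∀ j, a j ∈ F ∧ b j ∈ F)
    (hset : convexHull ℝ F \ F = ⋃ j, Ioo (a j) (b j))
    (hdis : Pairwise (Disjoint on fun j => Ioo (a j) (b j)))
    (hmono : Antitone fun j => b j - a j) (hr : 0 < r) {n : ℕ} (hn : 2 * r < b n - a n) :
    ((2 * n + 2 : ℕ) : ℝ≥0∞) ≤ μH[0] (frontier (cthickening r F)) := by
  classical
  set S : Finset ℝ := (Finset.range (n + 1)).biUnion fun j => {a j + r, b j - r}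
  have hlen : ∀ j ∈ Finset.range (n + 1), 2 * r < b j - a j := fun j hj =>
    hn.trans_le (hmono (Nat.lt_succ_iff.1 (Finset.mem_range.1 hj)))
  have hmem : ∀ j ∈ Finset.range (n + 1), ∀ x ∈ ({a j + r, b j - r} : Finset ℝ),
      x ∈ Ioo (a j) (b j) := fun j hj x hx => by
      have := hlen j hj
      rcases Finset.mem_insert.1 hx with rfl | hx
      · exact ⟨by linarith, by linarith⟩
      · rw [Finset.mem_singleton.1 hx]; exact ⟨by linarith, by linarith⟩
  have hcard : S.card = 2 * n + 2 := by
    rw [Finset.card_biUnion fun i hi j hj hij => Finset.disjoint_left.2 fun x hxi hxj =>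
      Set.disjoint_left.1 (hdis hij) (hmem i hi x hxi) (hmem j hj x hxj)]
    rw [Finset.sum_congr rfl fun j hj =>
      Finset.card_pair (by linarith [hlen j hj] : a j + r ≠ b j - r)]
    simp; ring
  have hsub : (S : Set ℝ) ⊆ frontier (cthickening r F) := fun x hx => by
    simp only [S, Finset.coe_biUnion, Finset.coe_range, mem_iUnion, Finset.coe_insert,
      Finset.coe_singleton] at hx
    obtain ⟨j, hj, hx⟩ := hx
    have := add_and_sub_mem_frontier_cthickening (hends j).1 (hends j).2 (disjoint_gap hset j) hr
      (hlen j (Finset.mem_range.2 hj))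
    rcases hx with rfl | rfl
    exacts [this.1, this.2]
  calc ((2 * n + 2 : ℕ) : ℝ≥0∞) = S.card := by rw [hcard]
    _ = μH[0] (S : Set ℝ) := (hausdorffMeasure_zero_finset S).symm
    _ ≤ _ := measure_mono hsub

end Frontier

theorem string_bounds_of_scontent_two_sided_general (F : Set ℝ) (hF : IsCompact F)
    (l : ℕ → ℝ) (hl : IsFractalString F l)
    (D : ℝ) (hD : D ∈ Set.Ioo (0 : ℝ) 1)
    (h1 : 0 < lowerSContent F D) (h2 : upperSContent F D < ⊤) :
    0 < Filter.liminf (fun j : ℕ => ((l j * (j : ℝ) ^ (1 / D) : ℝ) : EReal)) Filter.atTop ∧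
      Filter.limsup (fun j : ℕ => ((l j * (j : ℝ) ^ (1 / D) : ℝ) : EReal)) Filter.atTop < ⊤ := by
  obtain ⟨hmono, hpos, a, b, hdis, hab, hset⟩ := hl
  obtain rfl : l = fun j => b j - a j := funext fun j => (hab j).2.symm
  have hends := gap_endpoints_mem hF hdis hset fun j => (hab j).1
  have hvol : volume (convexHull ℝ F) ≠ ⊤ := by
    rw [hF.convexHull_eq_Icc ⟨a 0, (hends 0).1⟩]
    exact measure_Icc_lt_top.ne
  have hc0 : 0 < (1 - D) * kappa (1 - D) :=
    mul_pos (by linarith [hD.2]) (kappa_pos (by linarith [hD.2]))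
  obtain ⟨c, hc, hlow⟩ := exists_pos_eventually_ofReal_mul_le_of_pos_liminf h1
  obtain ⟨K, hup⟩ := exists_eventually_le_ofReal_mul_of_limsup_lt_top
    (eventually_nhdsWithin_of_forall fun r (hr : r ∈ Ioi 0) =>
      mul_pos hc0 (Real.rpow_pos_of_pos hr _)) h2
  have hl : Tendsto (fun j => b j - a j) atTop (𝓝 0) :=
    tendsto_sub_atTop_zero_of_pairwise_disjoint_Ioo hvol
      (fun j => (Ioo_subset_convexHull_diff hset j).trans sdiff_subset) hdis fun j => (hab j).1.le
  refine ⟨liminf_mul_rpow_inv_pos hD.1 (mul_pos hc hc0) ?_,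
    limsup_mul_rpow_inv_lt_top (K := K * ((1 - D) * kappa (1 - D))) hD.1 hpos hl ?_⟩
  · filter_upwards [hlow, self_mem_nhdsWithin] with r hr (hr0 : 0 < r) n hn
    have := hr.trans (hausdorffMeasure_frontier_cthickening_le hF hends hset hmono hr0 hn)
    rw [← mul_assoc] at this
    exact_mod_cast ENNReal.ofReal_le_natCast.1 this
  · filter_upwards [hup, self_mem_nhdsWithin] with r hr (hr0 : 0 < r) n hn
    have := (le_hausdorffMeasure_frontier_cthickening hends hset hdis hmono hr0 hn).trans hr
    rw [← mul_assoc] at this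
    exact_mod_cast (ENNReal.natCast_le_ofReal (by omega)).1 this

theorem string_bounds_of_scontent_two_sided (F : Set ℝ) (hF : IsCompact F)
    (hF0 : volume F = 0) (l : ℕ → ℝ) (hl : IsFractalString F l)
    (D : ℝ) (hD : D ∈ Set.Ioo (0 : ℝ) 1)
    (h1 : 0 < lowerSContent F D) (h2 : upperSContent F D < ⊤) :
    0 < Filter.liminf (fun j : ℕ => ((l j * (j : ℝ) ^ (1 / D) : ℝ) : EReal)) Filter.atTop ∧
      Filter.limsup (fun j : ℕ => ((l j * (j : ℝ) ^ (1 / D) : ℝ) : EReal)) Filter.atTop < ⊤ :=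
  string_bounds_of_scontent_two_sided_general F hF l hl D hD h1 h2
end
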